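/- arXiv:1706.05487 — 5 statements merged into one kernel-verified Lean document; each statement's English description precedes it below -/
import Mathlib

section
/- Let (X_i)_{i≥1} be a (χ,ρ)-attachment sequence. Then for every N ≥ 1 and every acceptable sequence (x_1,…,x_N) with counts N_k := #{i ≤ N : x_i = k} and maximal label d := max_{i≤N} x_i, one has ℙ((X_1,…,X_N) = (x_1,…,x_N)) = [∏_{j=0}^{d−1} (jχ + ρ) · ∏_{k=1}^{d} ∏_{l=1}^{N_k − 1} (l − χ)] / ∏_{n=0}^{N−1} (n + ρ). In particular this probability depends on (x_1,…,x_N) only through the counts (N_k)_{k=1}^d. -/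
open MeasureTheory Finset

/-- A finite sequence `(x 0, …, x (n-1))` of positive integers is *acceptable* if
`x 0 = 1` and each subsequent entry exceeds the current maximum by at most one
(equivalently, the first occurrence of `k+1` comes strictly after the first
occurrence of `k`). -/
def Acceptable (n : ℕ) (x : ℕ → ℕ) : Prop :=
  (∀ i < n, 1 ≤ x i) ∧ (0 < n → x 0 = 1) ∧
    ∀ i, i + 1 < n → x (i + 1) ≤ 1 + (Finset.range (i + 1)).sup x

/-- `cnt n x k` is the number of indices `i < n` with `x i = k`. -/
def cnt (n : ℕ) (x : ℕ → ℕ) (k : ℕ) : ℕ :=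
  ((Finset.range n).filter fun i => x i = k).card

/-- `dmax n x` is the largest label among `x 0, …, x (n-1)`. -/
def dmax (n : ℕ) (x : ℕ → ℕ) : ℕ :=
  (Finset.range n).sup x

/-- A `(χ,ρ)`-attachment sequence: a sequence of positive-integer valued random
variables encoding the linear preferential attachment tree with weights
`w_k = χ k + ρ`; `X i` is the index, in order of appearance, of the principal
subtree containing the `(i+2)`nd node. -/
def IsAttachmentSeq {Ω : Type*} [MeasurableSpace Ω] (μ : Measure Ω) (χ ρ : ℝ)
    (X : ℕ → Ω → ℕ) : Prop :=
  (∀ i, Measurable (X i)) ∧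
  μ {ω | X 0 ω = 1} = 1 ∧
  ∀ n : ℕ, 1 ≤ n → ∀ x : ℕ → ℕ, Acceptable n x → ∀ k : ℕ, 1 ≤ k →
    μ {ω | X n ω = k ∧ ∀ i < n, X i ω = x i} =
      (if k ≤ dmax n x then
        ENNReal.ofReal (((cnt n x k : ℝ) - χ) / ((n : ℝ) + ρ))
      else if k = dmax n x + 1 then
        ENNReal.ofReal (((dmax n x : ℝ) * χ + ρ) / ((n : ℝ) + ρ))
      else 0) * μ {ω | ∀ i < n, X i ω = x i}

/-! The probability of a prefix is a product of the conditional attachment probabilities along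
it. A step to an existing label `k` contributes `(c - χ)/(n + ρ)`, where `c` is the current
count of `k`, so label `k` contributes `∏_{l=1}^{N_k-1} (l - χ)` in total; a new label, when
`j` labels are present, contributes `(jχ + ρ)/(n + ρ)`. The only subtlety is that `ENNReal.ofReal` truncates negative
weights to `0`: this is harmless because the numerator is never negative, which for `χ < 0` uses
that `1/|χ| = m` is an integer, so that the weight `jχ + ρ` vanishes at `j = m + 1` before it
turns negative. -/

namespace Acceptable

variable {N : ℕ} {x : ℕ → ℕ}

lemma of_succ (h : Acceptable (N + 1) x) : Acceptable N x :=
  ⟨fun i hi => h.1 i (hi.trans N.lt_succ_self), fun _ => h.2.1 N.succ_pos,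
    fun i hi => h.2.2 i (hi.trans N.lt_succ_self)⟩

lemma le_dmax_add_one (h : Acceptable (N + 1) x) : x N ≤ dmax N x + 1 := by
  cases N with
  | zero => simp [h.2.1 one_pos]
  | succ n => rw [add_comm (dmax _ _)]; exact h.2.2 n (by omega)

end Acceptable

lemma dmax_succ (N : ℕ) (x : ℕ → ℕ) : dmax (N + 1) x = max (x N) (dmax N x) := by
  simp [dmax, range_add_one]

lemma le_dmax {N i : ℕ} {x : ℕ → ℕ} (hi : i < N) : x i ≤ dmax N x :=
  le_sup (mem_range.2 hi)

lemma cnt_succ (N : ℕ) (x : ℕ → ℕ) (k : ℕ) :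
    cnt (N + 1) x k = cnt N x k + if x N = k then 1 else 0 := by
  unfold cnt
  rw [range_add_one, filter_insert]
  split_ifs <;> simp [card_insert_of_notMem]

lemma cnt_eq_zero_of_dmax_lt {N k : ℕ} {x : ℕ → ℕ} (h : dmax N x < k) : cnt N x k = 0 := by
  refine card_eq_zero.2 (filter_eq_empty_iff.2 fun i hi => ?_)
  exact (lt_of_le_of_lt (le_dmax (mem_range.1 hi)) h).ne

lemma Acceptable.cnt_pos {N k : ℕ} {x : ℕ → ℕ} (hx : Acceptable N x) (hk : 1 ≤ k)
    (hkd : k ≤ dmax N x) : 0 < cnt N x k := by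
  induction N with
  | zero => simp [dmax] at hkd; omega
  | succ n ih =>
    rw [cnt_succ]
    by_cases hkn : k ≤ dmax n x
    · exact Nat.add_pos_left (ih hx.of_succ hkn) _
    · have : x n ≤ dmax n x + 1 := hx.le_dmax_add_one
      rw [dmax_succ] at hkd
      rw [if_pos (by omega)]
      omega

section CountProducts

variable {M : Type*} [CommMonoid M] (f : ℕ → M) {N : ℕ} {x : ℕ → ℕ}

lemma prod_Icc_cnt_succ_of_le {d : ℕ} (hxN : x N ∈ Icc 1 d) (hc : 0 < cnt N x (x N)) :
    ∏ k ∈ Icc 1 d, ∏ l ∈ Icc 1 (cnt (N + 1) x k - 1), f l =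
      (∏ k ∈ Icc 1 d, ∏ l ∈ Icc 1 (cnt N x k - 1), f l) * f (cnt N x (x N)) := by
  have hstep : ∀ k ∈ Icc 1 d, ∏ l ∈ Icc 1 (cnt (N + 1) x k - 1), f l =
      (∏ l ∈ Icc 1 (cnt N x k - 1), f l) * if k = x N then f (cnt N x (x N)) else 1 := by
    intro k _
    rw [cnt_succ]
    by_cases hk : k = x N
    · subst hk
      obtain ⟨c, hc'⟩ : ∃ c, cnt N x (x N) = c + 1 := ⟨_, (Nat.succ_pred_eq_of_pos hc).symm⟩
      rw [if_pos rfl, if_pos rfl, hc', Nat.add_sub_cancel, Nat.add_sub_cancel,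
        prod_Icc_succ_top (by omega)]
    · rw [if_neg (Ne.symm hk), if_neg hk, add_zero, mul_one]
  rw [prod_congr rfl hstep, prod_mul_distrib, prod_ite_eq', if_pos hxN]

lemma prod_Icc_cnt_succ_of_eq_dmax_add_one (hxN : x N = dmax N x + 1) :
    ∏ k ∈ Icc 1 (dmax N x + 1), ∏ l ∈ Icc 1 (cnt (N + 1) x k - 1), f l =
      ∏ k ∈ Icc 1 (dmax N x), ∏ l ∈ Icc 1 (cnt N x k - 1), f l := by
  have hnew : cnt (N + 1) x (dmax N x + 1) = 1 := by
    rw [cnt_succ, cnt_eq_zero_of_dmax_lt (Nat.lt_succ_self _), if_pos hxN]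
  rw [prod_Icc_succ_top (by omega), hnew, Nat.sub_self, Icc_eq_empty_of_lt one_pos, prod_empty,
    mul_one]
  refine prod_congr rfl fun k hk => ?_
  rw [cnt_succ, if_neg (by have := (mem_Icc.1 hk).2; omega), add_zero]

end CountProducts

section Weights

variable (χ ρ : ℝ)

noncomputable def attachNumerator (N : ℕ) (x : ℕ → ℕ) : ℝ :=
  (∏ j ∈ range (dmax N x), ((j : ℝ) * χ + ρ)) *
    ∏ k ∈ Icc 1 (dmax N x), ∏ l ∈ Icc 1 (cnt N x k - 1), ((l : ℝ) - χ)

noncomputable def attachWeight (n : ℕ) (x : ℕ → ℕ) : ℝ :=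
  if x n ≤ dmax n x then (cnt n x (x n) : ℝ) - χ else (dmax n x : ℝ) * χ + ρ

variable {χ ρ}

lemma attachNumerator_one {x : ℕ → ℕ} (h0 : x 0 = 1) : attachNumerator χ ρ 1 x = ρ := by
  have hd : dmax 1 x = 1 := by simp [dmax, h0]
  have hc : cnt 1 x 1 = 1 := by simp [cnt, filter_singleton, h0]
  simp [attachNumerator, hd, hc]

lemma attachNumerator_succ {N : ℕ} {x : ℕ → ℕ} (hx : Acceptable (N + 1) x) :
    attachNumerator χ ρ (N + 1) x = attachNumerator χ ρ N x * attachWeight χ ρ N x := by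
  unfold attachNumerator attachWeight
  split_ifs with hle
  · have hd : dmax (N + 1) x = dmax N x := by rw [dmax_succ, max_eq_right hle]
    have hx1 : 1 ≤ x N := hx.1 N N.lt_succ_self
    rw [hd, prod_Icc_cnt_succ_of_le _ (mem_Icc.2 ⟨hx1, hle⟩) (hx.of_succ.cnt_pos hx1 hle)]
    ring
  · have hxN : x N = dmax N x + 1 := by have := hx.le_dmax_add_one; omega
    have hd : dmax (N + 1) x = dmax N x + 1 := by rw [dmax_succ, hxN, max_eq_left (by omega)]
    rw [hd, prod_Icc_cnt_succ_of_eq_dmax_add_one _ hxN, prod_range_succ]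
    ring

lemma prod_range_mul_add_nonneg (hχ : χ ≤ 1) (hρ : ρ = 1 - χ)
    (hint : χ < 0 → ∃ m : ℕ, 0 < m ∧ (m : ℝ) * |χ| = 1) (d : ℕ) :
    0 ≤ ∏ j ∈ range d, ((j : ℝ) * χ + ρ) := by
  subst hρ
  rcases le_or_gt 0 χ with hχ0 | hχ0
  · exact prod_nonneg fun j _ => by nlinarith [(Nat.cast_nonneg j : (0 : ℝ) ≤ j)]
  obtain ⟨m, hm, hmχ⟩ := hint hχ0
  rw [abs_of_neg hχ0] at hmχ
  have hfactor : ∀ j : ℕ, (m : ℝ) * ((j : ℝ) * χ + (1 - χ)) = m + 1 - j := fun j => by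
    linear_combination (1 - (j : ℝ)) * hmχ
  have hm' : (0 : ℝ) < m := Nat.cast_pos.2 hm
  by_cases hd : d ≤ m + 2
  · refine prod_nonneg fun j hj => nonneg_of_mul_nonneg_right ?_ hm'
    have : (j : ℝ) ≤ m + 1 := by exact_mod_cast (show j ≤ m + 1 by simp at hj; omega)
    rw [hfactor]
    linarith
  · refine (prod_eq_zero (i := m + 1) (mem_range.2 (by omega)) ?_).ge
    push_cast
    linear_combination -hmχ

lemma attachNumerator_nonneg (hχ : χ < 1) (hρ : ρ = 1 - χ)
    (hint : χ < 0 → ∃ m : ℕ, 0 < m ∧ (m : ℝ) * |χ| = 1) (N : ℕ) (x : ℕ → ℕ) :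
    0 ≤ attachNumerator χ ρ N x :=
  mul_nonneg (prod_range_mul_add_nonneg hχ.le hρ hint _)
    (prod_nonneg fun _ _ => prod_nonneg fun l hl => by
      have : (1 : ℝ) ≤ l := by exact_mod_cast (mem_Icc.1 hl).1
      linarith)

end Weights

lemma setOf_forall_lt_succ {Ω : Type*} (X : ℕ → Ω → ℕ) (x : ℕ → ℕ) (n : ℕ) :
    {ω | ∀ i < n + 1, X i ω = x i} = {ω | X n ω = x n ∧ ∀ i < n, X i ω = x i} := by
  ext ω
  simp only [Set.mem_ofPred_eq, Nat.lt_succ_iff_lt_or_eq, or_imp, forall_and, forall_eq, and_comm]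

lemma IsAttachmentSeq.measure_succ {Ω : Type*} [MeasurableSpace Ω] {μ : Measure Ω} {χ ρ : ℝ}
    {X : ℕ → Ω → ℕ} (hX : IsAttachmentSeq μ χ ρ X) {n : ℕ} (hn : 1 ≤ n) {x : ℕ → ℕ}
    (hx : Acceptable (n + 1) x) :
    μ {ω | ∀ i < n + 1, X i ω = x i} =
      ENNReal.ofReal (attachWeight χ ρ n x / ((n : ℝ) + ρ)) * μ {ω | ∀ i < n, X i ω = x i} := by
  rw [setOf_forall_lt_succ, hX.2.2 n hn x hx.of_succ (x n) (hx.1 n n.lt_succ_self), attachWeight]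
  split_ifs with hle hnew
  · rfl
  · rfl
  · have := hx.le_dmax_add_one; omega

theorem stmt1_attachment_probability_general {Ω : Type*} [MeasurableSpace Ω]
    (μ : Measure Ω) (χ ρ : ℝ)
    (hχ : χ < 1) (hρ : ρ = 1 - χ)
    (hint : χ < 0 → ∃ m : ℕ, 0 < m ∧ (m : ℝ) * |χ| = 1)
    (X : ℕ → Ω → ℕ) (hX : IsAttachmentSeq μ χ ρ X)
    (N : ℕ) (hN : 1 ≤ N) (x : ℕ → ℕ) (hx : Acceptable N x) :
    μ {ω | ∀ i < N, X i ω = x i} =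
      ENNReal.ofReal
        (((∏ j ∈ Finset.range (dmax N x), ((j : ℝ) * χ + ρ)) *
            ∏ k ∈ Finset.Icc 1 (dmax N x),
              ∏ l ∈ Finset.Icc 1 (cnt N x k - 1), ((l : ℝ) - χ)) /
          ∏ n ∈ Finset.range N, ((n : ℝ) + ρ)) := by
  have hρpos : 0 < ρ := by linarith
  change _ = ENNReal.ofReal (attachNumerator χ ρ N x / _)
  induction N, hN using Nat.le_induction with
  | base =>
    have h0 : x 0 = 1 := hx.2.1 one_pos
    have hset : {ω | ∀ i < 1, X i ω = x i} = {ω | X 0 ω = 1} := by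
      simp [h0]
    rw [hset, hX.2.1, attachNumerator_one h0]
    simp [hρpos.ne']
  | succ n hn ih =>
    have hden : 0 < (n : ℝ) + ρ := by positivity
    have hprod : 0 < ∏ i ∈ range n, ((i : ℝ) + ρ) := prod_pos fun i _ => by positivity
    rw [hX.measure_succ hn hx, ih hx.of_succ, ← ENNReal.ofReal_mul'
      (div_nonneg (attachNumerator_nonneg hχ hρ hint n x) hprod.le), attachNumerator_succ hx,
      prod_range_succ]
    congr 1
    field_simp

/-- For a `(χ,ρ)`-attachment sequence with `χ < 1`, `ρ = 1 - χ`
(and `1/|χ|` a positive integer if `χ < 0`), the probability of any acceptable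
sequence `(x 0, …, x (N-1))` is
`(∏_{j=0}^{d-1} (jχ+ρ) ∏_{k=1}^{d} ∏_{l=1}^{N_k-1} (l-χ)) / ∏_{n=0}^{N-1} (n+ρ)`,
where `N_k` is the number of occurrences of `k` and `d` the maximal label;
in particular this probability depends on the sequence only through the counts. -/
theorem stmt1_attachment_probability {Ω : Type*} [MeasurableSpace Ω]
    (μ : Measure Ω) [IsProbabilityMeasure μ] (χ ρ : ℝ)
    (hχ : χ < 1) (hρ : ρ = 1 - χ)
    (hint : χ < 0 → ∃ m : ℕ, 0 < m ∧ (m : ℝ) * |χ| = 1)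
    (X : ℕ → Ω → ℕ) (hX : IsAttachmentSeq μ χ ρ X)
    (N : ℕ) (hN : 1 ≤ N) (x : ℕ → ℕ) (hx : Acceptable N x) :
    μ {ω | ∀ i < N, X i ω = x i} =
      ENNReal.ofReal
        (((∏ j ∈ Finset.range (dmax N x), ((j : ℝ) * χ + ρ)) *
            ∏ k ∈ Finset.Icc 1 (dmax N x),
              ∏ l ∈ Finset.Icc 1 (cnt N x k - 1), ((l : ℝ) - χ)) /
          ∏ n ∈ Finset.range N, ((n : ℝ) + ρ)) :=
  stmt1_attachment_probability_general μ χ ρ hχ hρ hint X hX N hN x hx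
end

section
/- Let 0 ≤ α < 1 and θ > 0, and let (P_i)_{i≥1} be a GEM(α, θ) stick-breaking sequence. Then ∑_{i=1}^∞ E[P_i²] = (1 − α)/(1 + θ). (For the parameters α = χ/(χ+ρ), θ = ρ/(χ+ρ) arising from linear preferential attachment with weights w_k = χk + ρ, this value equals ρ/(χ + 2ρ).) -/
/-!
By independence, `E[P_i²] = E[Z_i²] ∏_{j<i} E[(1 - Z_j)²]`. With `s_j = 1 + θ + jα` and
`x_j = (2 - α)/(s_j + 1)`, the Beta second moments read `E[Z_j²] = (1 - α) x_j / s_j` and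
`E[(1 - Z_j)²] = (s_{j+1}/s_j)(1 - x_j)`, so the ratios `s_{j+1}/s_j` telescope and
`E[P_i²] = (1 - α)/(1 + θ) · x_i ∏_{j<i} (1 - x_j)`. These are the pieces of a deterministic
stick-breaking with `∑ x_j = ∞` (harmonic growth), so they sum to `1`.
-/

open MeasureTheory ProbabilityTheory Finset

/-- The Beta(a, b) distribution on ℝ (supported on `(0,1)`), with density
`Γ(a+b)/(Γ(a)Γ(b)) x^(a-1) (1-x)^(b-1)` with respect to Lebesgue measure. -/
noncomputable def betaMeasure (a b : ℝ) : Measure ℝ :=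
  (volume.restrict (Set.Ioo (0 : ℝ) 1)).withDensity fun x =>
    ENNReal.ofReal
      (Real.Gamma (a + b) / (Real.Gamma a * Real.Gamma b) * x ^ (a - 1) * (1 - x) ^ (b - 1))

open Filter Topology

lemma integral_Ioo_rpow_mul_one_sub_rpow {a b : ℝ} (ha : 0 < a) (hb : 0 < b) :
    ∫ x in Set.Ioo (0 : ℝ) 1, x ^ (a - 1) * (1 - x) ^ (b - 1) = beta a b := by
  suffices Complex.betaIntegral a b =
      ((∫ x in Set.Ioo (0 : ℝ) 1, x ^ (a - 1) * (1 - x) ^ (b - 1) : ℝ) : ℂ) by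
    rw [beta_eq_betaIntegralReal a b ha hb, this, Complex.ofReal_re]
  rw [Complex.betaIntegral, intervalIntegral.integral_of_le zero_le_one,
    integral_Ioc_eq_integral_Ioo, ← integral_complex_ofReal]
  refine setIntegral_congr_fun measurableSet_Ioo fun x hx => ?_
  rw [Complex.ofReal_mul, Complex.ofReal_cpow hx.1.le,
    Complex.ofReal_cpow (sub_nonneg.2 hx.2.le)]
  push_cast
  ring

lemma integral_pow_mul_one_sub_pow_betaMeasure {a b : ℝ} (ha : 0 < a) (hb : 0 < b) (p q : ℕ) :
    ∫ x, x ^ p * (1 - x) ^ q ∂(_root_.betaMeasure a b) =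
      beta (a + p) (b + q) / beta a b := by
  set d : ℝ → ℝ := fun x => (beta a b)⁻¹ * x ^ (a - 1) * (1 - x) ^ (b - 1)
  have hd : _root_.betaMeasure a b =
      (volume.restrict (Set.Ioo (0 : ℝ) 1)).withDensity fun x => ((d x).toNNReal : ENNReal) := by
    simp only [_root_.betaMeasure, d, beta, inv_div]
    rfl
  rw [hd, integral_withDensity_eq_integral_smul (by fun_prop), div_eq_inv_mul,
    ← integral_Ioo_rpow_mul_one_sub_rpow (a := a + p) (b := b + q) (by positivity)
      (by positivity), ← integral_const_mul]
  refine setIntegral_congr_fun measurableSet_Ioo fun x hx => ?_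
  have hx1 : 0 < 1 - x := sub_pos.2 hx.2
  have hd0 : 0 ≤ d x := by
    have := beta_pos ha hb
    have := hx.1
    dsimp only [d]
    positivity
  rw [NNReal.smul_def, Real.coe_toNNReal _ hd0, smul_eq_mul, add_sub_right_comm,
    add_sub_right_comm b, Real.rpow_add hx.1, Real.rpow_add hx1, Real.rpow_natCast,
    Real.rpow_natCast]
  ring

lemma ProbabilityTheory.beta_add_two_left {a b : ℝ} (ha : 0 < a) (hb : 0 < b) :
    beta (a + 2) b = a * (a + 1) / ((a + b) * (a + b + 1)) * beta a b := by
  have Γ_add_two : ∀ c : ℝ, 0 < c → Real.Gamma (c + 2) = (c + 1) * c * Real.Gamma c := by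
    intro c hc
    rw [show c + 2 = c + 1 + 1 by ring, Real.Gamma_add_one (by positivity),
      Real.Gamma_add_one hc.ne', mul_assoc]
  have hab : 0 < a + b := add_pos ha hb
  simp only [beta, add_right_comm a 2 b, Γ_add_two a ha, Γ_add_two _ hab]
  have := Real.Gamma_pos_of_pos hab
  field_simp

lemma ProbabilityTheory.beta_comm (a b : ℝ) : beta a b = beta b a := by
  simp only [beta, mul_comm, add_comm]

lemma integral_sq_betaMeasure {a b : ℝ} (ha : 0 < a) (hb : 0 < b) :
    ∫ x, x ^ 2 ∂(_root_.betaMeasure a b) = a * (a + 1) / ((a + b) * (a + b + 1)) := by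
  have h := integral_pow_mul_one_sub_pow_betaMeasure ha hb 2 0
  simp only [pow_zero, mul_one, Nat.cast_ofNat, Nat.cast_zero, add_zero] at h
  rw [h, beta_add_two_left ha hb, mul_div_cancel_right₀ _ (beta_pos ha hb).ne']

lemma integral_one_sub_sq_betaMeasure {a b : ℝ} (ha : 0 < a) (hb : 0 < b) :
    ∫ x, (1 - x) ^ 2 ∂(_root_.betaMeasure a b) = b * (b + 1) / ((a + b) * (a + b + 1)) := by
  have h := integral_pow_mul_one_sub_pow_betaMeasure ha hb 0 2
  simp only [pow_zero, one_mul, Nat.cast_ofNat, Nat.cast_zero, add_zero] at h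
  rw [h, beta_comm a, beta_add_two_left hb ha, beta_comm b,
    mul_div_cancel_right₀ _ (beta_pos ha hb).ne']
  ring

lemma prod_range_div_of_ne_zero {K : Type*} [Field K] {f : ℕ → K} (hf : ∀ i, f i ≠ 0)
    (n : ℕ) :
    ∏ i ∈ range n, f (i + 1) / f i = f n / f 0 := by
  induction n with
  | zero => simp [hf 0]
  | succ n ih =>
    rw [prod_range_succ, ih]
    field_simp [hf n]

lemma mul_prod_range_ratio_mul_one_sub {K : Type*} [Field K] {s x : ℕ → K} (hs : ∀ j, s j ≠ 0)
    (c : K) (i : ℕ) :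
    c / s i * x i * ∏ j ∈ range i, (s (j + 1) / s j * (1 - x j)) =
      c / s 0 * (x i * ∏ j ∈ range i, (1 - x j)) := by
  rw [prod_mul_distrib, prod_range_div_of_ne_zero hs]
  field_simp [hs i]

lemma tendsto_prod_range_one_sub_of_not_summable {x : ℕ → ℝ} (h0 : ∀ i, 0 ≤ x i)
    (h1 : ∀ i, x i ≤ 1) (hx : ¬Summable x) :
    Tendsto (fun n => ∏ i ∈ range n, (1 - x i)) atTop (𝓝 0) := by
  have hexp : Tendsto (fun n => Real.exp (-∑ i ∈ range n, x i)) atTop (𝓝 0) :=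
    Real.tendsto_exp_atBot.comp <| tendsto_neg_atTop_atBot.comp <|
      (not_summable_iff_tendsto_nat_atTop_of_nonneg h0).1 hx
  refine squeeze_zero (fun n => prod_nonneg fun i _ => sub_nonneg.2 (h1 i)) (fun n => ?_) hexp
  calc ∏ i ∈ range n, (1 - x i)
      ≤ ∏ i ∈ range n, Real.exp (-x i) :=
        prod_le_prod (fun i _ => sub_nonneg.2 (h1 i)) fun i _ => Real.one_sub_le_exp_neg (x i)
    _ = Real.exp (-∑ i ∈ range n, x i) := by rw [← Real.exp_sum, sum_neg_distrib]

lemma hasSum_mul_prod_range_one_sub {x : ℕ → ℝ} (h0 : ∀ i, 0 ≤ x i) (h1 : ∀ i, x i ≤ 1)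
    (hx : ¬Summable x) : HasSum (fun i => x i * ∏ j ∈ range i, (1 - x j)) 1 := by
  have hpartial : ∀ n, ∑ i ∈ range n, x i * ∏ j ∈ range i, (1 - x j) =
      1 - ∏ j ∈ range n, (1 - x j) := by
    intro n
    have := sum_range_sub' (fun i => ∏ j ∈ range i, (1 - x j)) n
    simp only [prod_range_succ, prod_range_zero] at this
    rw [← this]
    exact sum_congr rfl fun i _ => by ring
  rw [hasSum_iff_tendsto_nat_of_nonneg
    (fun i => mul_nonneg (h0 i) (prod_nonneg fun j _ => sub_nonneg.2 (h1 j)))]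
  simp only [hpartial]
  simpa using (tendsto_prod_range_one_sub_of_not_summable h0 h1 hx).const_sub 1

lemma not_summable_div_add_mul {c d e : ℝ} (hc : 0 < c) (hd : 0 < d) (he : 0 ≤ e) :
    ¬Summable fun j : ℕ => c / (d + j * e) := by
  intro hs
  refine Real.not_summable_one_div_natCast ((summable_nat_add_iff 1).1 ?_)
  have hcomp : ∀ j : ℕ, 1 / ((j + 1 : ℕ) : ℝ) ≤ (d + e) / c * (c / (d + j * e)) := by
    intro j
    rw [div_mul_div_cancel₀ hc.ne', Nat.cast_succ,
      div_le_div_iff₀ (by positivity) (by positivity)]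
    nlinarith [mul_nonneg (Nat.cast_nonneg j : (0 : ℝ) ≤ j) hd.le]
  exact (hs.mul_left ((d + e) / c)).of_nonneg_of_le (fun j => by positivity) hcomp

lemma ProbabilityTheory.iIndepFun.integral_comp_mul_prod_range_comp {Ω β : Type*}
    [MeasurableSpace Ω] [MeasurableSpace β] {μ : Measure Ω} {Z : ℕ → Ω → β} (hZ : iIndepFun Z μ)
    (hmeas : ∀ j, AEMeasurable (Z j) μ) {f g : β → ℝ} (hf : Measurable f) (hg : Measurable g)
    (i : ℕ) :
    ∫ ω, f (Z i ω) * ∏ j ∈ range i, g (Z j ω) ∂μ =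
      (∫ ω, f (Z i ω) ∂μ) * ∏ j ∈ range i, ∫ ω, g (Z j ω) ∂μ := by
  classical
  let F : Fin (i + 1) → β → ℝ := fun k => if k = Fin.last i then f else g
  have h := (hZ.precomp (g := Fin.val) Fin.val_injective).integral_fun_prod_comp
    (f := F) (fun k => hmeas k) fun k => by
      dsimp only [F]
      split_ifs
      exacts [hf.aestronglyMeasurable, hg.aestronglyMeasurable]
  have hrange : ∀ ω, ∏ k : Fin i, g (Z k ω) = ∏ j ∈ range i, g (Z j ω) := fun ω =>
    Fin.prod_univ_eq_prod_range (fun j => g (Z j ω)) i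
  simpa [F, Fin.prod_univ_castSucc, Fin.castSucc_ne_last, hrange,
    Fin.prod_univ_eq_prod_range (fun j => ∫ ω, g (Z j ω) ∂μ), mul_comm] using h

section GEM

variable {α θ : ℝ}

lemma integral_sq_betaMeasure_gem (hα1 : α < 1) {j : ℕ} (hb : 0 < θ + (j + 1) * α) :
    ∫ y, y ^ 2 ∂(_root_.betaMeasure (1 - α) (θ + (j + 1) * α)) =
      (1 - α) / (1 + θ + j * α) * ((2 - α) / (2 + θ + j * α)) := by
  rw [integral_sq_betaMeasure (by linarith) hb, div_mul_div_comm]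
  congr 1 <;> ring

lemma integral_one_sub_sq_betaMeasure_gem (hα1 : α < 1) {j : ℕ} (hb : 0 < θ + (j + 1) * α) :
    ∫ y, (1 - y) ^ 2 ∂(_root_.betaMeasure (1 - α) (θ + (j + 1) * α)) =
      (1 + θ + ((j + 1 : ℕ) : ℝ) * α) / (1 + θ + j * α) * (1 - (2 - α) / (2 + θ + j * α)) := by
  have h1 : 1 + θ + j * α ≠ 0 := by linarith
  have h2 : 2 + θ + j * α ≠ 0 := by linarith
  rw [integral_one_sub_sq_betaMeasure (by linarith) hb,
    show 1 - α + (θ + (j + 1) * α) = 1 + θ + j * α by ring,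
    show 1 + θ + j * α + 1 = 2 + θ + j * α by ring]
  push_cast
  field_simp
  ring

end GEM

theorem stmt8_GEM_sum_of_squares_general {Ω : Type*} [MeasurableSpace Ω]
    (μ : Measure Ω) (α θ : ℝ)
    (hα0 : 0 ≤ α) (hα1 : α < 1) (hθ : 0 < θ)
    (Z : ℕ → Ω → ℝ)
    (hmeas : ∀ j, Measurable (Z j))
    (hindep : iIndepFun Z μ)
    (hlaw : ∀ j : ℕ, Measure.map (Z j) μ = _root_.betaMeasure (1 - α) (θ + (j + 1) * α))
    (P : ℕ → Ω → ℝ)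
    (hP : ∀ i ω, P i ω = Z i ω * ∏ j ∈ Finset.range i, (1 - Z j ω)) :
    (∑' i : ℕ, ∫ ω, (P i ω) ^ 2 ∂μ) = (1 - α) / (1 + θ) := by
  set x : ℕ → ℝ := fun j => (2 - α) / (2 + θ + j * α)
  have hb : ∀ j : ℕ, 0 < θ + (j + 1) * α := fun j => by positivity
  have hZsq : ∀ j : ℕ, ∫ ω, Z j ω ^ 2 ∂μ = (1 - α) / (1 + θ + j * α) * x j := fun j => by
    rw [← integral_sq_betaMeasure_gem hα1 (hb j), ← hlaw j,
      integral_map (hmeas j).aemeasurable (by fun_prop)]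
  have hOneSubZsq : ∀ j : ℕ, ∫ ω, (1 - Z j ω) ^ 2 ∂μ =
      (1 + θ + ((j + 1 : ℕ) : ℝ) * α) / (1 + θ + j * α) * (1 - x j) := fun j => by
    rw [← integral_one_sub_sq_betaMeasure_gem hα1 (hb j), ← hlaw j,
      integral_map (hmeas j).aemeasurable (by fun_prop)]
  have hPsq : ∀ i, ∫ ω, P i ω ^ 2 ∂μ =
      (1 - α) / (1 + θ) * (x i * ∏ j ∈ range i, (1 - x j)) := fun i => by
    simp_rw [hP, mul_pow, ← prod_pow]
    rw [hindep.integral_comp_mul_prod_range_comp (fun j => (hmeas j).aemeasurable)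
      (f := (· ^ 2)) (g := fun y => (1 - y) ^ 2) (by fun_prop) (by fun_prop) i]
    simp_rw [hZsq, hOneSubZsq]
    simpa using mul_prod_range_ratio_mul_one_sub (s := fun j : ℕ => 1 + θ + j * α) (x := x)
      (fun j => by positivity) (1 - α) i
  have hx0 : ∀ j, 0 ≤ x j := fun j => div_nonneg (by linarith) (by positivity)
  have hx1 : ∀ j, x j ≤ 1 := fun j =>
    div_le_one_of_le₀ (by nlinarith [mul_nonneg (Nat.cast_nonneg j : (0 : ℝ) ≤ j) hα0])
      (by positivity)
  simp_rw [hPsq]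
  rw [tsum_mul_left, (hasSum_mul_prod_range_one_sub hx0 hx1 ?_).tsum_eq, mul_one]
  exact not_summable_div_add_mul (by linarith) (by linarith) hα0

/-- For a GEM(α, θ) stick-breaking sequence
`P_i = Z_i ∏_{j<i} (1 - Z_j)` (with `0 ≤ α < 1`, `θ > 0`), one has
`∑_i E[P_i²] = (1 - α)/(1 + θ)`.  (For `α = χ/(χ+ρ)`, `θ = ρ/(χ+ρ)` this equals
`ρ/(χ + 2ρ)`.) -/
theorem stmt8_GEM_sum_of_squares {Ω : Type*} [MeasurableSpace Ω]
    (μ : Measure Ω) [IsProbabilityMeasure μ] (α θ : ℝ)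
    (hα0 : 0 ≤ α) (hα1 : α < 1) (hθ : 0 < θ)
    (Z : ℕ → Ω → ℝ)
    (hmeas : ∀ j, Measurable (Z j))
    (hrange : ∀ j, ∀ ω, Z j ω ∈ Set.Icc (0 : ℝ) 1)
    (hindep : iIndepFun Z μ)
    (hlaw : ∀ j : ℕ, Measure.map (Z j) μ = _root_.betaMeasure (1 - α) (θ + (j + 1) * α))
    (P : ℕ → Ω → ℝ)
    (hP : ∀ i ω, P i ω = Z i ω * ∏ j ∈ Finset.range i, (1 - Z j ω)) :
    (∑' i : ℕ, ∫ ω, (P i ω) ^ 2 ∂μ) = (1 - α) / (1 + θ) :=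
  stmt8_GEM_sum_of_squares_general μ α θ hα0 hα1 hθ Z hmeas hindep hlaw P hP
end

section
/- Let α and θ be real numbers with 0 ≤ α < 1 and θ > 0. Then the series ∑_{i=1}^∞ ∏_{j=1}^{i−1} (θ + jα)/(θ + 2 + jα) converges and its sum equals (θ + 2)/(2 − α). -/
/-!
Write `f m` for the summand and put `c m = f m (θ + 2 + m α) / (2 - α)`. Then
`c m - c (m + 1) = f m`, so the series telescopes to `c 0 = (θ + 2) / (2 - α)` provided
`c m → 0`. Since `θ + 2 + m α ≤ (θ + 2) (m + 1)`, the decrement `f m` is at least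
`κ c m / (m + 1)` with `κ = (2 - α) / (θ + 2) > 0`; a positive limit of the decreasing sequence
`c` would therefore make `∑ f m` dominate a multiple of the harmonic series.
-/

open Finset Filter Topology

theorem hasSum_sub_succ_of_antitone {c : ℕ → ℝ} {L : ℝ} (hc : Antitone c)
    (h : Tendsto c atTop (𝓝 L)) : HasSum (fun n => c n - c (n + 1)) (c 0 - L) := by
  rw [hasSum_iff_tendsto_nat_of_nonneg fun n => sub_nonneg.2 (hc n.le_succ)]
  simpa only [sum_range_sub'] using h.const_sub (c 0)

theorem tendsto_zero_of_mul_div_succ_le_sub_succ {c : ℕ → ℝ} {κ : ℝ} (hκ : 0 < κ)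
    (hc : ∀ n, 0 ≤ c n) (h : ∀ n : ℕ, κ * c n / (n + 1) ≤ c n - c (n + 1)) :
    Tendsto c atTop (𝓝 0) := by
  have hanti : Antitone c := antitone_nat_of_succ_le fun n => by
    have hdec : 0 ≤ κ * c n / (n + 1) := by have := hc n; positivity
    linarith [h n]
  have hbdd : BddBelow (Set.range c) := ⟨0, Set.forall_mem_range.2 hc⟩
  have hlim := tendsto_atTop_ciInf hanti hbdd
  suffices hL : ⨅ n, c n = 0 by rwa [hL] at hlim
  by_contra hL
  have hLpos : 0 < ⨅ n, c n := (le_ciInf hc).lt_of_ne' hL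
  have hharm : Summable fun n : ℕ => κ * (⨅ n, c n) * (1 / ((n : ℝ) + 1)) :=
    (hasSum_sub_succ_of_antitone hanti hlim).summable.of_nonneg_of_le (fun n => by positivity)
      fun n => by
        rw [mul_one_div]
        refine le_trans ?_ (h n)
        gcongr
        exact ciInf_le hbdd n
  refine Real.not_summable_one_div_natCast ((summable_nat_add_iff 1).1 ?_)
  exact_mod_cast (summable_mul_left_iff (mul_pos hκ hLpos).ne').1 hharm

noncomputable def gaussTerm (α θ : ℝ) (m : ℕ) : ℝ :=
  ∏ j ∈ Icc 1 m, (θ + j * α) / (θ + 2 + j * α)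

theorem gaussTerm_succ (α θ : ℝ) (m : ℕ) :
    gaussTerm α θ (m + 1) =
      gaussTerm α θ m * ((θ + (m + 1) * α) / (θ + 2 + (m + 1) * α)) := by
  rw [gaussTerm, prod_Icc_succ_top (Nat.le_add_left 1 m), gaussTerm]
  push_cast
  ring

theorem gaussTerm_pos {α θ : ℝ} (hα : 0 ≤ α) (hθ : 0 < θ) (m : ℕ) :
    0 < gaussTerm α θ m :=
  prod_pos fun j _ => by positivity

/-- Closed form of the tail `∑_{k ≥ m} gaussTerm α θ k`. -/
noncomputable def gaussTail (α θ : ℝ) (m : ℕ) : ℝ :=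
  gaussTerm α θ m * (θ + 2 + m * α) / (2 - α)

theorem gaussTail_zero (α θ : ℝ) : gaussTail α θ 0 = (θ + 2) / (2 - α) := by
  simp [gaussTail, gaussTerm]

theorem gaussTail_sub_succ {α θ : ℝ} {m : ℕ} (hα : α ≠ 2)
    (hden : θ + 2 + (m + 1) * α ≠ 0) :
    gaussTail α θ m - gaussTail α θ (m + 1) = gaussTerm α θ m := by
  rw [gaussTail, gaussTail, gaussTerm_succ, Nat.cast_succ, mul_assoc (gaussTerm α θ m),
    div_mul_cancel₀ _ hden]
  field_simp [sub_ne_zero.2 hα.symm]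
  ring

theorem gaussTail_pos {α θ : ℝ} (hα0 : 0 ≤ α) (hα2 : α < 2) (hθ : 0 < θ) (m : ℕ) :
    0 < gaussTail α θ m := by
  have := gaussTerm_pos hα0 hθ m
  have : 0 < 2 - α := sub_pos.2 hα2
  unfold gaussTail
  positivity

theorem div_mul_gaussTail_div_succ_le {α θ : ℝ} (hα0 : 0 ≤ α) (hα2 : α < 2) (hθ : 0 < θ)
    (m : ℕ) : (2 - α) / (θ + 2) * gaussTail α θ m / (m + 1) ≤ gaussTerm α θ m := by
  have hterm := gaussTerm_pos hα0 hθ m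
  have h2α : 0 < 2 - α := sub_pos.2 hα2
  have hle : θ + 2 + m * α ≤ (θ + 2) * (m + 1) := by nlinarith [m.cast_nonneg (α := ℝ)]
  calc (2 - α) / (θ + 2) * gaussTail α θ m / (m + 1)
      = gaussTerm α θ m * (θ + 2 + m * α) / ((θ + 2) * (m + 1)) := by
        rw [gaussTail]; field_simp
    _ ≤ gaussTerm α θ m := by
        rw [div_le_iff₀ (by positivity)]
        exact mul_le_mul_of_nonneg_left hle hterm.le

theorem hasSum_gaussTerm {α θ : ℝ} (hα0 : 0 ≤ α) (hα2 : α < 2) (hθ : 0 < θ) :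
    HasSum (gaussTerm α θ) ((θ + 2) / (2 - α)) := by
  have htel (m : ℕ) : gaussTail α θ m - gaussTail α θ (m + 1) = gaussTerm α θ m :=
    gaussTail_sub_succ hα2.ne (by positivity)
  have hanti : Antitone (gaussTail α θ) := antitone_nat_of_succ_le fun m => by
    linarith [htel m, gaussTerm_pos hα0 hθ m]
  have hlim : Tendsto (gaussTail α θ) atTop (𝓝 0) :=
    tendsto_zero_of_mul_div_succ_le_sub_succ (κ := (2 - α) / (θ + 2))
      (div_pos (sub_pos.2 hα2) (by positivity))
      (fun m => (gaussTail_pos hα0 hα2 hθ m).le)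
      fun m => by rw [htel]; exact div_mul_gaussTail_div_succ_le hα0 hα2 hθ m
  simpa only [htel, gaussTail_zero, sub_zero] using hasSum_sub_succ_of_antitone hanti hlim

/-- For real `0 ≤ α < 1` and `θ > 0`, the series
`∑_{i=1}^∞ ∏_{j=1}^{i-1} (θ + jα)/(θ + 2 + jα)` converges (here the summand for
`i` is indexed by `i - 1 = m : ℕ`, with the empty product for `m = 0` equal to 1)
and its sum equals `(θ + 2)/(2 - α)`.  (This is Gauss's evaluation of the
hypergeometric series `F(θ/α + 1, 1; (θ+2)/α + 1; 1)`.) -/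
theorem stmt9_gauss_sum (α θ : ℝ) (hα0 : 0 ≤ α) (hα1 : α < 1) (hθ : 0 < θ) :
    Summable (fun m : ℕ => ∏ j ∈ Finset.Icc 1 m, (θ + j * α) / (θ + 2 + j * α)) ∧
      (∑' m : ℕ, ∏ j ∈ Finset.Icc 1 m, (θ + j * α) / (θ + 2 + j * α)) =
        (θ + 2) / (2 - α) :=
  have h := hasSum_gaussTerm hα0 (hα1.trans one_lt_two) hθ
  ⟨h.summable, h.tsum_eq⟩
end

section
/- Let n ≥ 2, let v_1, …, v_n be distinct finite sequences of positive integers whose set {v_1,…,v_n} is closed under taking initial segments (so it contains the empty sequence), and let X_1, …, X_n be pairwise distinct infinite sequences of positive integers such that v_k is an initial segment of X_k for each k. Let lcp denote the length of the longest common initial segment, and define Y := ∑_{k≠ℓ} lcp(v_k, v_ℓ), Ŷ := ∑_{k≠ℓ} lcp(X_k, X_ℓ), H := max_k (length of v_k), and Ĥ := max_{k≠ℓ} lcp(X_k, X_ℓ). Then 0 ≤ Ŷ − Y ≤ 2·n·H·Ĥ, and moreover H ≤ Ĥ + 1. -/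
/-!
Let `d = firstDiff (X k) (X l)` be the first index where the infinite sequences differ. As long as
neither of `v k`, `v l` is an initial segment of the other, the two finite sequences already
disagree at `d`, so `lcp(v k, v l) = lcp(X k, X l)`; in general only `≤` holds. A pair `(k, l)`
with `v k` a proper initial segment of `v l` is determined by `l` and `|v k| < H`, so there are at
most `2 n H` exceptional ordered pairs, each contributing at most `Ĥ`. For `H ≤ Ĥ + 1`, the initial
segment of length `H - 1` of a longest `v k` is some `v l`, and `X l`, `X k` agree on it.
-/
open Finset

/-- The length of the longest common initial segment of two finite sequences
(given as lists). -/
def lcpList (u w : List ℕ+) : ℕ :=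
  ((u.zip w).takeWhile fun p => decide (p.1 = p.2)).length

/-- The length (in `ℕ∞`) of the longest common initial segment of two infinite
sequences. -/
noncomputable def lcpSeq (X Y : ℕ → ℕ+) : ℕ∞ :=
  ⨆ l ∈ {l : ℕ | ∀ i < l, X i = Y i}, (l : ℕ∞)

open PiNat

lemma lcpList_cons (a b : ℕ+) (u w : List ℕ+) :
    lcpList (a :: u) (b :: w) = if a = b then lcpList u w + 1 else 0 := by
  by_cases hab : a = b <;> simp [lcpList, hab]

lemma le_lcpList_iff {u w : List ℕ+} {l : ℕ} :
    l ≤ lcpList u w ↔ l ≤ u.length ∧ l ≤ w.length ∧ u.take l = w.take l := by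
  induction u generalizing w l with
  | nil => cases l <;> simp [lcpList]
  | cons a u ih =>
    cases w with
    | nil => cases l <;> simp [lcpList]
    | cons b w =>
      cases l with
      | zero => simp
      | succ l => rw [lcpList_cons]; split_ifs with hab <;> simp [hab, ih]

lemma lcpList_comm (u w : List ℕ+) : lcpList u w = lcpList w u :=
  eq_of_forall_le_iff fun l => by rw [le_lcpList_iff, le_lcpList_iff]; tauto

lemma lcpList_le_length_left (u w : List ℕ+) : lcpList u w ≤ u.length :=
  (le_lcpList_iff.mp le_rfl).1

lemma take_lcpList_eq (u w : List ℕ+) : u.take (lcpList u w) = w.take (lcpList u w) :=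
  (le_lcpList_iff.mp le_rfl).2.2

lemma isPrefix_of_length_le_lcpList {u w : List ℕ+} (h : u.length ≤ lcpList u w) : u <+: w := by
  obtain ⟨-, -, htake⟩ := le_lcpList_iff.mp h
  rw [List.take_length] at htake
  exact htake ▸ List.take_prefix _ _

lemma getElem_eq_getElem_of_lt_lcpList {u w : List ℕ+} {i : ℕ} (hi : i < lcpList u w) :
    u[i]'(hi.trans_le (lcpList_le_length_left u w)) =
      w[i]'(hi.trans_le ((lcpList_comm u w).trans_le (lcpList_le_length_left w u))) := by
  have h := congrArg (·[i]?) (take_lcpList_eq u w)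
  simp only [List.getElem?_take_of_lt hi] at h
  rwa [List.getElem?_eq_getElem, List.getElem?_eq_getElem, Option.some_inj] at h

lemma getElem_lcpList_ne {u w : List ℕ+} (hu : lcpList u w < u.length)
    (hw : lcpList u w < w.length) : u[lcpList u w] ≠ w[lcpList u w] := by
  intro heq
  have : lcpList u w + 1 ≤ lcpList u w := le_lcpList_iff.mpr ⟨hu, hw, by
    rw [List.take_succ_eq_append_getElem hu, List.take_succ_eq_append_getElem hw, heq,
      take_lcpList_eq]⟩
  omega

lemma le_lcpSeq {X Y : ℕ → ℕ+} {l : ℕ} (h : ∀ i < l, X i = Y i) : (l : ℕ∞) ≤ lcpSeq X Y :=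
  le_iSup₂ (f := fun (l : ℕ) (_ : l ∈ {l : ℕ | ∀ i < l, X i = Y i}) => (l : ℕ∞)) l h

lemma lcpSeq_eq_firstDiff {X Y : ℕ → ℕ+} (h : X ≠ Y) : lcpSeq X Y = firstDiff X Y :=
  le_antisymm
    (iSup₂_le fun _ hl => Nat.cast_le.mpr (not_lt.mp fun hlt => apply_firstDiff_ne h (hl _ hlt)))
    (le_lcpSeq fun _ => apply_eq_of_lt_firstDiff)

section InitialSegments

variable {u w : List ℕ+} {X Y : ℕ → ℕ+}

lemma lcpList_le_lcpSeq (hu : ∀ i (h : i < u.length), u[i] = X i)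
    (hw : ∀ i (h : i < w.length), w[i] = Y i) : (lcpList u w : ℕ∞) ≤ lcpSeq X Y :=
  le_lcpSeq fun i hi => by
    have h := getElem_eq_getElem_of_lt_lcpList hi
    rwa [hu, hw] at h

lemma lcpSeq_le_lcpList (hXY : X ≠ Y) (hu : ∀ i (h : i < u.length), u[i] = X i)
    (hw : ∀ i (h : i < w.length), w[i] = Y i) (hincomp : ¬(u <+: w ∨ w <+: u)) :
    lcpSeq X Y ≤ lcpList u w := by
  rw [lcpSeq_eq_firstDiff hXY, Nat.cast_le]
  by_contra! hlt
  have hmu : lcpList u w < u.length := (lcpList_le_length_left u w).lt_of_ne fun h =>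
    hincomp (.inl (isPrefix_of_length_le_lcpList h.ge))
  have hmw : lcpList u w < w.length := by
    refine ((lcpList_comm u w).trans_le (lcpList_le_length_left w u)).lt_of_ne fun h => ?_
    exact hincomp (.inr (isPrefix_of_length_le_lcpList ((lcpList_comm w u).trans h).ge))
  exact getElem_lcpList_ne hmu hmw (by rw [hu, hw, apply_eq_of_lt_firstDiff hlt])

end InitialSegments

lemma sum_le_sum_add_card_filter_nsmul {ι M : Type*} [AddCommMonoid M] [PartialOrder M]
    [IsOrderedAddMonoid M] [CanonicallyOrderedAdd M] {s : Finset ι} {f g : ι → M} {B : M}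
    (P : ι → Prop) [DecidablePred P] (hgood : ∀ i ∈ s, ¬P i → g i ≤ f i)
    (hbad : ∀ i ∈ s, P i → g i ≤ B) :
    ∑ i ∈ s, g i ≤ ∑ i ∈ s, f i + #{i ∈ s | P i} • B := by
  rw [← sum_filter_add_sum_filter_not s P g, add_comm]
  gcongr
  · calc ∑ i ∈ s with ¬P i, g i ≤ ∑ i ∈ s with ¬P i, f i :=
          sum_le_sum fun i hi => hgood i (mem_filter.mp hi).1 (mem_filter.mp hi).2
      _ ≤ ∑ i ∈ s, f i := sum_le_sum_of_subset (filter_subset _ _)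
  · exact sum_le_card_nsmul _ _ _ fun i hi => hbad i (mem_filter.mp hi).1 (mem_filter.mp hi).2

section Families

variable {ι : Type*} [Fintype ι]

lemma card_offDiag_filter_isPrefix_le {α : Type*} [DecidableEq α] {v : ι → List α}
    (hv : Function.Injective v) {H : ℕ} (hH : ∀ k, (v k).length ≤ H) :
    #{p ∈ univ.offDiag | v p.1 <+: v p.2} ≤ Fintype.card ι * H := by
  -- a proper initial segment of `v l` is determined by its length
  calc #{p ∈ univ.offDiag | v p.1 <+: v p.2}
      ≤ #((univ : Finset ι) ×ˢ range H) := by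
        refine card_le_card_of_injOn (fun p => (p.2, (v p.1).length)) ?_ ?_
        · rintro ⟨k, l⟩ hp
          simp only [coe_filter, mem_offDiag, Set.mem_ofPred_eq] at hp
          obtain ⟨⟨-, -, hkl⟩, hpre⟩ := hp
          have hlt : (v k).length < (v l).length :=
            hpre.length_le.lt_of_ne fun h => hkl (hv (hpre.eq_of_length h))
          simpa using hlt.trans_le (hH l)
        · rintro ⟨k, l⟩ hp ⟨k', l'⟩ hp' heq
          simp only [coe_filter, mem_offDiag, Set.mem_ofPred_eq, Prod.mk.injEq] at hp hp' heq
          obtain ⟨rfl, hlen⟩ := heq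
          rw [hv ((List.prefix_of_prefix_length_le hp.2 hp'.2 hlen.le).eq_of_length hlen)]
    _ = Fintype.card ι * H := by simp

lemma card_offDiag_filter_isPrefix_or_le [DecidableEq ι] {α : Type*} [DecidableEq α]
    {v : ι → List α} (hv : Function.Injective v) {H : ℕ} (hH : ∀ k, (v k).length ≤ H) :
    #{p ∈ univ.offDiag | v p.1 <+: v p.2 ∨ v p.2 <+: v p.1} ≤ 2 * (Fintype.card ι * H) := by
  have hA := card_offDiag_filter_isPrefix_le hv hH
  set A := {p ∈ (univ : Finset ι).offDiag | v p.1 <+: v p.2}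
  calc #{p ∈ univ.offDiag | v p.1 <+: v p.2 ∨ v p.2 <+: v p.1}
      ≤ #(A ∪ A.image Prod.swap) := by
        refine card_le_card fun p hp => ?_
        simp only [A, mem_union, mem_image, mem_filter, mem_offDiag, mem_univ, true_and] at hp ⊢
        rcases hp with ⟨hne, h | h⟩
        · exact .inl ⟨hne, h⟩
        · exact .inr ⟨p.swap, ⟨Ne.symm hne, h⟩, rfl⟩
    _ ≤ #A + #A := (card_union_le _ _).trans (Nat.add_le_add_left card_image_le _)
    _ ≤ 2 * (Fintype.card ι * H) := by omega

lemma length_le_sup_lcpSeq_add_one {v : ι → List ℕ+}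
    (hclosed : ∀ k, ∀ u, u <+: v k → ∃ l, v l = u) {X : ι → ℕ → ℕ+}
    (hprefix : ∀ k i (h : i < (v k).length), (v k)[i] = X k i) (k : ι) :
    ((v k).length : ℕ∞) ≤ univ.offDiag.sup (fun p => lcpSeq (X p.1) (X p.2)) + 1 := by
  rcases hk : (v k).length with _ | m
  · simp
  obtain ⟨l, hl⟩ := hclosed k _ (List.take_prefix m (v k))
  have hlen : (v l).length = m := by rw [hl, List.length_take, hk]; omega
  have hlk : l ≠ k := fun h => by rw [h, hk] at hlen; omega
  have hagree : (m : ℕ∞) ≤ lcpSeq (X l) (X k) := le_lcpSeq fun i hi => by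
    rw [← hprefix l i (hlen ▸ hi), ← hprefix k i (by omega)]
    simp only [hl, List.getElem_take]
  rw [Nat.cast_succ]
  exact add_le_add_left (hagree.trans (le_sup (f := fun p => lcpSeq (X p.1) (X p.2))
    (b := (l, k)) (mem_offDiag.mpr ⟨mem_univ l, mem_univ k, hlk⟩))) 1

end Families

theorem stmt11_pathlength_approximation_general (n : ℕ)
    (v : Fin n → List ℕ+) (hvinj : Function.Injective v)
    (hclosed : ∀ k : Fin n, ∀ u : List ℕ+, u <+: v k → ∃ l : Fin n, v l = u)
    (X : Fin n → ℕ → ℕ+)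
    (hXdist : ∀ k l : Fin n, k ≠ l → X k ≠ X l)
    (hprefix : ∀ k : Fin n, ∀ i (h : i < (v k).length), (v k).get ⟨i, h⟩ = X k i) :
    ((∑ p ∈ (Finset.univ : Finset (Fin n)).offDiag, lcpList (v p.1) (v p.2) : ℕ) : ℕ∞) ≤
        (∑ p ∈ (Finset.univ : Finset (Fin n)).offDiag, lcpSeq (X p.1) (X p.2)) ∧
      (∑ p ∈ (Finset.univ : Finset (Fin n)).offDiag, lcpSeq (X p.1) (X p.2)) ≤
        ((∑ p ∈ (Finset.univ : Finset (Fin n)).offDiag, lcpList (v p.1) (v p.2) : ℕ) : ℕ∞) +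
          2 * (n : ℕ∞) * ((Finset.univ.sup fun k : Fin n => (v k).length : ℕ) : ℕ∞) *
            ((Finset.univ : Finset (Fin n)).offDiag.sup fun p => lcpSeq (X p.1) (X p.2)) ∧
      ((Finset.univ.sup fun k : Fin n => (v k).length : ℕ) : ℕ∞) ≤
        ((Finset.univ : Finset (Fin n)).offDiag.sup fun p => lcpSeq (X p.1) (X p.2)) + 1 := by
  set H := univ.sup fun k : Fin n => (v k).length
  have hH : ∀ k, (v k).length ≤ H := fun k => le_sup (f := fun k => (v k).length) (mem_univ k)
  have hcard := card_offDiag_filter_isPrefix_or_le hvinj hH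
  rw [Fintype.card_fin] at hcard
  refine ⟨?_, ?_, ?_⟩
  · push_cast
    exact sum_le_sum fun p _ => lcpList_le_lcpSeq (hprefix p.1) (hprefix p.2)
  · refine (sum_le_sum_add_card_filter_nsmul (fun p => v p.1 <+: v p.2 ∨ v p.2 <+: v p.1)
      (fun p hp => lcpSeq_le_lcpList (hXdist _ _ (mem_offDiag.mp hp).2.2)
        (hprefix p.1) (hprefix p.2))
      (fun p hp _ => le_sup (f := fun p => lcpSeq (X p.1) (X p.2)) hp)).trans ?_
    rw [nsmul_eq_mul, Nat.cast_sum]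
    gcongr
    exact_mod_cast hcard.trans_eq (by ring)
  · rw [apply_sup_eq_sup_comp Nat.cast (fun _ _ => Nat.mono_cast.map_max) Nat.cast_zero]
    exact Finset.sup_le fun k _ => length_le_sup_lcpSeq_add_one hclosed hprefix k

/-- Let `n ≥ 2`, let `v 1, …, v n` be distinct finite sequences
of positive integers whose set is closed under taking initial segments, and let
`X 1, …, X n` be pairwise distinct infinite sequences with `v k` an initial
segment of `X k`.  With `Y := ∑_{k≠ℓ} lcp(v k, v ℓ)`,
`Ŷ := ∑_{k≠ℓ} lcp(X k, X ℓ)` (sums over ordered pairs of distinct indices),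
`H := max_k |v k|` and `Ĥ := max_{k≠ℓ} lcp(X k, X ℓ)`, one has
`0 ≤ Ŷ - Y ≤ 2 n H Ĥ` (i.e. `Y ≤ Ŷ` and `Ŷ ≤ Y + 2 n H Ĥ`), and `H ≤ Ĥ + 1`. -/
theorem stmt11_pathlength_approximation (n : ℕ) (hn : 2 ≤ n)
    (v : Fin n → List ℕ+) (hvinj : Function.Injective v)
    (hclosed : ∀ k : Fin n, ∀ u : List ℕ+, u <+: v k → ∃ l : Fin n, v l = u)
    (X : Fin n → ℕ → ℕ+)
    (hXdist : ∀ k l : Fin n, k ≠ l → X k ≠ X l)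
    (hprefix : ∀ k : Fin n, ∀ i (h : i < (v k).length), (v k).get ⟨i, h⟩ = X k i) :
    ((∑ p ∈ (Finset.univ : Finset (Fin n)).offDiag, lcpList (v p.1) (v p.2) : ℕ) : ℕ∞) ≤
        (∑ p ∈ (Finset.univ : Finset (Fin n)).offDiag, lcpSeq (X p.1) (X p.2)) ∧
      (∑ p ∈ (Finset.univ : Finset (Fin n)).offDiag, lcpSeq (X p.1) (X p.2)) ≤
        ((∑ p ∈ (Finset.univ : Finset (Fin n)).offDiag, lcpList (v p.1) (v p.2) : ℕ) : ℕ∞) +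
          2 * (n : ℕ∞) * ((Finset.univ.sup fun k : Fin n => (v k).length : ℕ) : ℕ∞) *
            ((Finset.univ : Finset (Fin n)).offDiag.sup fun p => lcpSeq (X p.1) (X p.2)) ∧
      ((Finset.univ.sup fun k : Fin n => (v k).length : ℕ) : ℕ∞) ≤
        ((Finset.univ : Finset (Fin n)).offDiag.sup fun p => lcpSeq (X p.1) (X p.2)) + 1 :=
  stmt11_pathlength_approximation_general n v hvinj hclosed X hXdist hprefix
end

section
/- Let (P^v)_{v∈ℕ*} be an i.i.d. family of random probability vectors with a := ∑_{i=1}^∞ E[(P^∅_i)²], and assume a < 1. Define the random variable Q := ∑_{m=1}^∞ ∑_{(i_1,…,i_m)∈ℕ^m} ∏_{j=1}^m (P^{(i_1,…,i_{j−1})}_{i_j})². Then Q < ∞ almost surely and E[Q] = a/(1 − a) = 1/(1 − a) − 1. -/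
/-!
Expand `E[Q]` by monotone convergence into the expected weights of the individual paths
`(i_1, …, i_m)`. The prefixes of a path are distinct vertices of the tree, so the factors of
a path weight are independent, and each has the law of a factor at the root. Hence the
expected weight of a path is `∏_j c (i_j)` with `c k = E[(P^∅_k)²]`, the paths of length `m`
contribute `a ^ m`, and `E[Q] = ∑_{m ≥ 1} a ^ m = a / (1 - a) < ∞`, which forces `Q < ∞`
almost surely.
-/

open MeasureTheory ProbabilityTheory Finset
open scoped ENNReal NNReal

theorem ENNReal.tsum_pi_fin_prod {α : Type*} :
    ∀ (n : ℕ) (c : Fin n → α → ℝ≥0∞),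
      ∑' f : Fin n → α, ∏ j, c j (f j) = ∏ j, ∑' k, c j k
  | 0, c => by simp
  | n + 1, c => by
    rw [← (Fin.consEquiv fun _ => α).tsum_eq, ENNReal.tsum_prod', Fin.prod_univ_succ,
      ← ENNReal.tsum_pi_fin_prod n, ← ENNReal.tsum_mul_right]
    refine tsum_congr fun k => ?_
    rw [← ENNReal.tsum_mul_left]
    exact tsum_congr fun f => by simp [Fin.consEquiv, Fin.prod_univ_succ]

theorem ENNReal.tsum_ofReal_sq_le_one {p : ℕ → ℝ} (hp : ∀ i, 0 ≤ p i)
    (hsum : ∑' i, p i = 1) : ∑' i, ENNReal.ofReal (p i) ^ 2 ≤ 1 := by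
  have hsummable : Summable p := by
    by_contra h
    simp [tsum_eq_zero_of_not_summable h] at hsum
  have hone : ∑' i, ENNReal.ofReal (p i) = 1 := by
    rw [← ENNReal.ofReal_tsum_of_nonneg hp hsummable, hsum, ENNReal.ofReal_one]
  calc ∑' i, ENNReal.ofReal (p i) ^ 2
      ≤ ∑' i, ENNReal.ofReal (p i) := ENNReal.tsum_le_tsum fun i => by
        rw [sq]
        exact mul_le_of_le_one_left' (hone ▸ ENNReal.le_tsum i)
    _ = 1 := hone

theorem lintegral_prod_comp_of_iIndepFun {Ω ι κ β : Type*} [MeasurableSpace Ω]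
    [MeasurableSpace β] [Fintype κ] {μ : Measure Ω} {X : ι → Ω → β}
    (hX : ∀ i, Measurable (X i)) (hindep : iIndepFun X μ) {u : κ → ι} (hu : u.Injective)
    {F : κ → β → ℝ≥0∞} (hF : ∀ j, Measurable (F j)) :
    ∫⁻ ω, ∏ j, F j (X (u j) ω) ∂μ = ∏ j, ∫⁻ ω, F j (X (u j) ω) ∂μ :=
  lintegral_prod_eq_prod_lintegral_of_indepFun univ (fun j => F j ∘ X (u j))
    ((hindep.precomp hu).comp F hF) fun j => (hF j).comp (hX (u j))

theorem Measurable.ofReal_sq_apply {α : Type*} [MeasurableSpace α] {p : α → ℕ → ℝ}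
    (hp : Measurable p) (k : ℕ) : Measurable fun x => ENNReal.ofReal (p x k) ^ 2 :=
  (measurable_pi_iff.mp hp k).ennreal_ofReal.pow_const 2

theorem List.ofFn_castLE_injective {α : Type*} {m : ℕ} (i : Fin m → α) :
    (fun j : Fin m => List.ofFn fun t : Fin j.1 => i (Fin.castLE j.2.le t)).Injective :=
  fun j j' h => Fin.ext <| by simpa using congrArg List.length h

section PathWeight

variable {Ω : Type*}

/-- The `j`-th factor of a path `i` is indexed by the vertex `(i_0, …, i_{j-1})`, the
prefix of `i` of length `j`. -/
noncomputable def pathWeight (P : List ℕ → Ω → ℕ → ℝ) {m : ℕ} (i : Fin m → ℕ) (ω : Ω) :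
    ℝ≥0∞ :=
  ∏ j : Fin m,
    ENNReal.ofReal (P (List.ofFn fun t : Fin j.1 => i (Fin.castLE j.2.le t)) ω (i j)) ^ 2

variable [MeasurableSpace Ω] {μ : Measure Ω} {P : List ℕ → Ω → ℕ → ℝ}

theorem measurable_pathWeight (hP : ∀ v, Measurable (P v)) {m : ℕ} (i : Fin m → ℕ) :
    Measurable (pathWeight P i) :=
  Finset.measurable_prod _ fun j _ => (hP _).ofReal_sq_apply (i j)

theorem lintegral_pathWeight (hP : ∀ v, Measurable (P v)) (hindep : iIndepFun P μ)
    (hident : ∀ v, Measure.map (P v) μ = Measure.map (P []) μ) {m : ℕ} (i : Fin m → ℕ) :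
    ∫⁻ ω, pathWeight P i ω ∂μ = ∏ j, ∫⁻ ω, ENNReal.ofReal (P [] ω (i j)) ^ 2 ∂μ := by
  unfold pathWeight
  rw [lintegral_prod_comp_of_iIndepFun (F := fun j p => ENNReal.ofReal (p (i j)) ^ 2) hP
    hindep (List.ofFn_castLE_injective i) fun j => measurable_id.ofReal_sq_apply (i j)]
  have hPv : ∀ v, IdentDistrib (P v) (P []) μ μ := fun v =>
    ⟨(hP v).aemeasurable, (hP []).aemeasurable, hident v⟩
  exact prod_congr rfl fun j _ =>
    ((hPv _).comp (measurable_id.ofReal_sq_apply (i j))).lintegral_eq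

theorem lintegral_tsum_tsum_pathWeight (hP : ∀ v, Measurable (P v)) (hindep : iIndepFun P μ)
    (hident : ∀ v, Measure.map (P v) μ = Measure.map (P []) μ) :
    ∫⁻ ω, ∑' (m : ℕ) (i : Fin (m + 1) → ℕ), pathWeight P i ω ∂μ =
      (∑' k, ∫⁻ ω, ENNReal.ofReal (P [] ω k) ^ 2 ∂μ) *
        (1 - ∑' k, ∫⁻ ω, ENNReal.ofReal (P [] ω k) ^ 2 ∂μ)⁻¹ := by
  rw [← ENNReal.tsum_geometric_add_one, lintegral_tsum fun m =>
    (Measurable.tsum fun i => measurable_pathWeight hP i).aemeasurable]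
  refine tsum_congr fun m => ?_
  rw [lintegral_tsum fun i => (measurable_pathWeight hP i).aemeasurable]
  simp only [lintegral_pathWeight hP hindep hident]
  rw [ENNReal.tsum_pi_fin_prod (m + 1) fun _ k => ∫⁻ ω, ENNReal.ofReal (P [] ω k) ^ 2 ∂μ,
    prod_const, card_univ, Fintype.card_fin]

end PathWeight

section RandomProbabilityVector

variable {Ω : Type*} [MeasurableSpace Ω] {μ : Measure Ω} [IsProbabilityMeasure μ]
  {p : Ω → ℕ → ℝ}

theorem tsum_lintegral_ofReal_sq_le_one (hp : Measurable p)
    (hprob : ∀ᵐ ω ∂μ, (∀ i, 0 ≤ p ω i) ∧ ∑' i, p ω i = 1) :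
    ∑' k, ∫⁻ ω, ENNReal.ofReal (p ω k) ^ 2 ∂μ ≤ 1 := by
  rw [← lintegral_tsum fun k => (hp.ofReal_sq_apply k).aemeasurable]
  calc ∫⁻ ω, ∑' k, ENNReal.ofReal (p ω k) ^ 2 ∂μ
      ≤ ∫⁻ _, 1 ∂μ :=
        lintegral_mono_ae <| hprob.mono fun ω h => ENNReal.tsum_ofReal_sq_le_one h.1 h.2
    _ = 1 := by simp

theorem ofReal_tsum_integral_sq (hp : Measurable p)
    (hprob : ∀ᵐ ω ∂μ, (∀ i, 0 ≤ p ω i) ∧ ∑' i, p ω i = 1) :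
    ENNReal.ofReal (∑' k, ∫ ω, p ω k ^ 2 ∂μ) =
      ∑' k, ∫⁻ ω, ENNReal.ofReal (p ω k) ^ 2 ∂μ := by
  have hle := tsum_lintegral_ofReal_sq_le_one hp hprob
  have hfin : ∀ k, ∫⁻ ω, ENNReal.ofReal (p ω k) ^ 2 ∂μ ≠ ⊤ := fun k =>
    ne_top_of_le_ne_top ENNReal.one_ne_top ((ENNReal.le_tsum k).trans hle)
  have hint : ∀ k, ∫ ω, p ω k ^ 2 ∂μ = (∫⁻ ω, ENNReal.ofReal (p ω k) ^ 2 ∂μ).toReal := by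
    intro k
    rw [integral_eq_lintegral_of_nonneg_ae (ae_of_all _ fun ω => sq_nonneg (p ω k))
      ((measurable_pi_iff.mp hp k).pow_const 2).aestronglyMeasurable]
    congr 1
    refine lintegral_congr_ae ?_
    filter_upwards [hprob] with ω hω using ENNReal.ofReal_pow (hω.1 k) 2
  simp_rw [hint]
  rw [← ENNReal.tsum_toReal_eq hfin,
    ENNReal.ofReal_toReal (ne_top_of_le_ne_top ENNReal.one_ne_top hle)]

end RandomProbabilityVector

/-- Let `(P^v)_{v ∈ ℕ*}` be an i.i.d. family of random
probability vectors with `a := ∑_i E[(P^∅_i)²] < 1`, and define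
`Q := ∑_{m≥1} ∑_{(i_1,…,i_m)} ∏_{j=1}^m (P^{(i_1,…,i_{j-1})}_{i_j})²`
(a well-defined random variable with values in `[0, ∞]`; below the outer sum over
`m : ℕ` enumerates tuple lengths `m + 1 ≥ 1`).  Then `Q < ∞` almost surely and
`E[Q] = a/(1 - a) = 1/(1 - a) - 1`. -/
theorem stmt13_Q_finite_and_mean {Ω : Type*} [MeasurableSpace Ω]
    (μ : Measure Ω) [IsProbabilityMeasure μ]
    (P : List ℕ → Ω → ℕ → ℝ)
    (hPmeas : ∀ v, Measurable (P v))
    (hiid : iIndepFun P μ)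
    (hident : ∀ v, Measure.map (P v) μ = Measure.map (P []) μ)
    (hprob : ∀ v, ∀ᵐ ω ∂μ, (∀ i, 0 ≤ P v ω i) ∧ (∑' i : ℕ, P v ω i) = 1)
    (a : ℝ) (ha : a = ∑' i : ℕ, ∫ ω, (P [] ω i) ^ 2 ∂μ) (ha1 : a < 1)
    (Q : Ω → ℝ≥0∞)
    (hQ : Q = fun ω => ∑' (m : ℕ), ∑' (i : Fin (m + 1) → ℕ),
      ∏ j : Fin (m + 1),
        (ENNReal.ofReal
          (P (List.ofFn fun t : Fin j.1 => i (Fin.castLE j.2.le t)) ω (i j))) ^ 2) :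
    (∀ᵐ ω ∂μ, Q ω < ⊤) ∧ ∫⁻ ω, Q ω ∂μ = ENNReal.ofReal (a / (1 - a)) := by
  have hQ' : Q = fun ω => ∑' (m : ℕ) (i : Fin (m + 1) → ℕ), pathWeight P i ω := hQ
  have ha0 : 0 ≤ a := ha ▸ tsum_nonneg fun i => integral_nonneg fun ω => sq_nonneg _
  have hmean : ∫⁻ ω, Q ω ∂μ = ENNReal.ofReal (a / (1 - a)) := by
    rw [hQ', lintegral_tsum_tsum_pathWeight hPmeas hiid hident,
      ← ofReal_tsum_integral_sq (hPmeas []) (hprob []), ← ha, ← ENNReal.ofReal_one,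
      ← ENNReal.ofReal_sub _ ha0, ENNReal.ofReal_div_of_pos (by linarith), div_eq_mul_inv]
  have hQmeas : Measurable Q :=
    hQ' ▸ Measurable.tsum fun m => Measurable.tsum (measurable_pathWeight hPmeas)
  exact ⟨ae_lt_top hQmeas (hmean ▸ ENNReal.ofReal_ne_top), hmean⟩
end
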